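/- arXiv:1608.01112 — 2 statements merged into one kernel-verified Lean document; each statement's English description precedes it below -/
import Mathlib

section
/- Let Φ be a functor from the simplex category Δ to the category of finite directed graphs that is faithful. Then for every n, setting G_n = Φ([n]), G_0 with vertex set of size a+1, and letting x̄^j be the tuple (Φ(g_j)(0),…,Φ(g_j)(a)) for the j-th monotone map g_j : [0] → [n], the first-order formula η (asserting existence of a homomorphic image of G_1 whose restrictions along Φ(f_s) and Φ(f_t) give the two tuples) satisfies: G_n ⊨ η(x̄^i, x̄^j) if i < j. -/
/-- A homomorphism of digraphs maps arcs to arcs. -/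
def Digraph.IsHom {V W : Type*} (G : Digraph V) (H : Digraph W) (f : V → W) : Prop :=
  ∀ u v, G.Adj u v → H.Adj (f u) (f v)

/-- An oriented graph: at most one arc between any two vertices (hence no loops). -/
def Digraph.Oriented {V : Type*} (G : Digraph V) : Prop :=
  ∀ u v, G.Adj u v → ¬ G.Adj v u

/-- The arcs of a digraph. -/
def Digraph.Arcs {V : Type*} (G : Digraph V) : Type _ := {p : V × V // G.Adj p.1 p.2}

/-- Vertex type of the replacement construction `G*(I,a,b)`: original vertices plus, for
each arc, the internal vertices of a copy of the cycle of length `L` with distinguished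
vertices `a` (position `0`) and `b` (position `d+1`). -/
def RVert {V : Type*} (G : Digraph V) (L d : ℕ) : Type _ :=
  V ⊕ (G.Arcs × {i : Fin L // i.val ≠ 0 ∧ i.val ≠ d + 1})

/-- The vertex of `G*(I,a,b)` corresponding to position `i` on the cycle copy of arc `e`:
position `0` (the vertex `a`) is identified with the tail, position `d+1` (the vertex `b`)
with the head of `e`. -/
def toVert {V : Type*} (G : Digraph V) (L d : ℕ) (e : G.Arcs) (i : Fin L) : RVert G L d :=
  if h0 : i.val = 0 then Sum.inl e.1.1
  else if h1 : i.val = d + 1 then Sum.inl e.1.2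
  else Sum.inr (e, ⟨i, h0, h1⟩)

/-- Cyclic successor on `Fin m`. -/
def cyc {m : ℕ} (k : Fin m) : Fin m := ⟨(k.val + 1) % m, Nat.mod_lt _ k.pos⟩

/-- The replacement construction `G*(I,a,b)`: each arc of `G` is replaced by a disjoint copy
of the directed cycle of length `L` whose distinguished vertices `a`, `b` (at directed
distance `d+1` along the cycle) are identified with tail and head of the arc. -/
def Replace {V : Type*} (G : Digraph V) (L d : ℕ) : Digraph (RVert G L d) where
  Adj x y := ∃ (e : G.Arcs) (i : Fin L), x = toVert G L d e i ∧ y = toVert G L d e (cyc i)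

/-- Image of an arc under a digraph homomorphism. -/
def Digraph.mapArc {V W : Type*} (G : Digraph V) (H : Digraph W) (g : V → W)
    (hg : G.IsHom H g) : G.Arcs → H.Arcs :=
  fun e => ⟨(g e.1.1, g e.1.2), hg _ _ e.2⟩

/-- Action of the replacement functor on homomorphisms. -/
def RMap {V W : Type*} (G : Digraph V) (H : Digraph W) (L d : ℕ) (g : V → W)
    (hg : G.IsHom H g) : RVert G L d → RVert H L d :=
  Sum.map g (fun p => (G.mapArc H g hg p.1, p.2))

/-- The underlying undirected (simple) graph of a digraph. -/
def Digraph.underlying {V : Type*} (G : Digraph V) : SimpleGraph V where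
  Adj u v := u ≠ v ∧ (G.Adj u v ∨ G.Adj v u)
  symm := ⟨fun _ _ h => ⟨Ne.symm h.1, h.2.symm⟩⟩
  loopless := ⟨fun _ h => h.1 rfl⟩

/-- Auxiliary (oriented) relation of the `d`-th subdivision of a simple graph: each edge is
replaced by a path with `d` internal vertices; the smaller endpoint of an edge attaches at
position `0`, the larger at position `d-1`. For `d = 0`, original adjacency is kept. -/
def SubdivRel {V : Type*} [LinearOrder V] (H : SimpleGraph V) (d : ℕ) :
    (V ⊕ (H.edgeSet × Fin d)) → (V ⊕ (H.edgeSet × Fin d)) → Prop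
  | Sum.inl u, Sum.inl v => d = 0 ∧ H.Adj u v
  | Sum.inl u, Sum.inr (e, i) =>
      (i.val = 0 ∧ u ∈ e.val ∧ ∀ w ∈ e.val, u ≤ w) ∨
      (i.val = d - 1 ∧ u ∈ e.val ∧ ∀ w ∈ e.val, w ≤ u)
  | Sum.inr _, Sum.inl _ => False
  | Sum.inr (e, i), Sum.inr (e', j) => e = e' ∧ j.val = i.val + 1

/-- The `d`-th subdivision `Sub_d(H)` of a simple graph `H`: every edge is replaced by a
path with `d` internal vertices. -/
def Subdiv {V : Type*} [LinearOrder V] (H : SimpleGraph V) (d : ℕ) :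
    SimpleGraph (V ⊕ (H.edgeSet × Fin d)) where
  Adj x y := SubdivRel H d x y ∨ SubdivRel H d y x
  symm := ⟨fun _ _ h => h.symm⟩
  loopless := ⟨by
    rintro (u | ⟨e, i⟩) h
    · rcases h with ⟨_, h⟩ | ⟨_, h⟩ <;> exact H.loopless.irrefl u h
    · rcases h with ⟨_, h⟩ | ⟨_, h⟩ <;> simp [SubdivRel] at h⟩

/-- `f` embeds `H` as a (not necessarily induced) subgraph of `G`. -/
def IsSubgraphEmb {V W : Type*} (H : SimpleGraph V) (G : SimpleGraph W) (f : V → W) : Prop :=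
  Function.Injective f ∧ ∀ u v, H.Adj u v → G.Adj (f u) (f v)

/-- A class of finite graphs, one vertex set `Fin n` for each size. -/
abbrev GraphClass := Set (Σ n, SimpleGraph (Fin n))

/-- `H` is a subgraph of some member of the class `C`. -/
def ContainsAsSubgraph (C : GraphClass) {V : Type*} (H : SimpleGraph V) : Prop :=
  ∃ (n : ℕ) (G : SimpleGraph (Fin n)), ⟨n, G⟩ ∈ C ∧ ∃ f : V → Fin n, IsSubgraphEmb H G f

/-- `C` is monotone: closed under taking (not necessarily induced) subgraphs. -/
def MonotoneClass (C : GraphClass) : Prop :=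
  ∀ (n : ℕ) (G : SimpleGraph (Fin n)) (m : ℕ) (H : SimpleGraph (Fin m)),
    ⟨n, G⟩ ∈ C → (∃ f, IsSubgraphEmb H G f) → ⟨m, H⟩ ∈ C

/-- `C` is nowhere dense: for every `p` there is `N` such that the `p`-th subdivision of
`K_N` is a subgraph of no member of `C`. -/
def NowhereDense (C : GraphClass) : Prop :=
  ∀ p : ℕ, ∃ N : ℕ, ¬ ContainsAsSubgraph C (Subdiv (⊤ : SimpleGraph (Fin N)) p)

/-- The map `f_s : [0] → [1]` of the simplex category, sending `0` to `0`. -/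
def fs : Fin (0 + 1) →o Fin (1 + 1) := ⟨fun _ => 0, monotone_const⟩

/-- The map `f_t : [0] → [1]` of the simplex category, sending `0` to `1`. -/
def ft : Fin (0 + 1) →o Fin (1 + 1) := ⟨fun _ => 1, monotone_const⟩

/-- The `j`-th monotone map `g_j : [0] → [n]`, the constant map with value `j`. -/
def cmap (n : ℕ) (j : Fin (n + 1)) : Fin (0 + 1) →o Fin (n + 1) := ⟨fun _ => j, monotone_const⟩

/-- A functor from the simplex category `Δ` to the category of finite directed graphs:
objects `[n]` are sent to digraphs on `Fin (size n)`, monotone maps to digraph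
homomorphisms, functorially. -/
structure DeltaFunctor where
  size : ℕ → ℕ
  obj : ∀ n : ℕ, Digraph (Fin (size n))
  map : ∀ {m n : ℕ}, (Fin (m + 1) →o Fin (n + 1)) → (Fin (size m) → Fin (size n))
  map_hom : ∀ {m n : ℕ} (f : Fin (m + 1) →o Fin (n + 1)), (obj m).IsHom (obj n) (map f)
  map_id : ∀ n : ℕ, map (OrderHom.id : Fin (n + 1) →o Fin (n + 1)) = id
  map_comp : ∀ {m n p : ℕ} (f : Fin (m + 1) →o Fin (n + 1)) (g : Fin (n + 1) →o Fin (p + 1)),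
    map (g.comp f) = map g ∘ map f

/-- `Φ` is faithful: injective on hom-sets. -/
def DeltaFunctor.Faithful (Φ : DeltaFunctor) : Prop :=
  ∀ (m n : ℕ) (f f' : Fin (m + 1) →o Fin (n + 1)), Φ.map f = Φ.map f' → f = f'

/-- The meaning of the first-order formula `η(x̄,ȳ)`: there exist `z_0, …, z_b` forming a
homomorphism `h` of `G₁` into the ambient digraph `D` with `x i = z (φ_s i)` and
`y i = z (φ_t i)` for all `i`. -/
def EtaSem {A B W : Type*} (G₁ : Digraph B) (phs pht : A → B) (D : Digraph W)
    (x y : A → W) : Prop :=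
  ∃ z : B → W, G₁.IsHom D z ∧ (∀ i, x i = z (phs i)) ∧ (∀ i, y i = z (pht i))


def edgeMap {n : ℕ} (i j : Fin (n + 1)) (hij : i ≤ j) : Fin (1 + 1) →o Fin (n + 1) :=
  ⟨![i, j], fun a b hab => by fin_cases a <;> fin_cases b <;> simp_all⟩

theorem edgeMap_comp_fs {n : ℕ} (i j : Fin (n + 1)) (hij : i ≤ j) :
    (edgeMap i j hij).comp fs = cmap n i := rfl

theorem edgeMap_comp_ft {n : ℕ} (i j : Fin (n + 1)) (hij : i ≤ j) :
    (edgeMap i j hij).comp ft = cmap n j := rfl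

theorem DeltaFunctor.etaSem_map_comp (Φ : DeltaFunctor) {n : ℕ}
    (f : Fin (1 + 1) →o Fin (n + 1)) :
    EtaSem (Φ.obj 1) (Φ.map fs) (Φ.map ft) (Φ.obj n)
      (Φ.map (f.comp fs)) (Φ.map (f.comp ft)) :=
  ⟨Φ.map f, Φ.map_hom f, congrFun (Φ.map_comp fs f), congrFun (Φ.map_comp ft f)⟩

theorem stmt8_general (Φ : DeltaFunctor) (n : ℕ) (i j : Fin (n + 1))
    (hij : i < j) :
    EtaSem (Φ.obj 1) (Φ.map fs) (Φ.map ft) (Φ.obj n)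
      (fun v => Φ.map (cmap n i) v) (fun v => Φ.map (cmap n j) v) := by
  rw [← edgeMap_comp_fs i j hij.le, ← edgeMap_comp_ft i j hij.le]
  exact Φ.etaSem_map_comp _

/-- For a faithful functor `Φ : Δ → DiGraph`, setting `G_n = Φ([n])` and
`x̄^j = Φ(g_j)` (as a tuple indexed by the vertices of `G_0`), the formula `η` (asserting
factorization through a homomorphic copy of `G_1` along `Φ(f_s)`, `Φ(f_t)`) satisfies
`G_n ⊨ η(x̄^i, x̄^j)` whenever `i < j`. -/
theorem stmt8 (Φ : DeltaFunctor) (hfaith : Φ.Faithful) (n : ℕ) (i j : Fin (n + 1))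
    (hij : i < j) :
    EtaSem (Φ.obj 1) (Φ.map fs) (Φ.map ft) (Φ.obj n)
      (fun v => Φ.map (cmap n i) v) (fun v => Φ.map (cmap n j) v) :=
  stmt8_general Φ n i j hij
end

section
/- The class of graphs of the form underlying(G*(C_{2n}, a, b)), where G ranges over all finite oriented graphs and n = |V(G)|, is nowhere dense: for every d ≥ 1 and every N ≥ d + 3, the d-th subdivision of K_N is a subgraph of no graph in this class. -/
/-!
Branch vertices of `Sub_d(K_N)` have degree `N - 1 ≥ 3`, whereas the internal vertices of the
cycles of `G*(C_{2n},a,b)` have degree two; so an embedding sends the `N` branch vertices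
injectively to vertices of `G`, and `n ≥ N ≥ d + 3`. Two distinct vertices of `G` are at distance
at least `n` in the replacement graph, as witnessed by a `1`-Lipschitz potential (the distance
from one of them, capped at `n`), but two branch vertices are joined by a path of length
`d + 1 < n`.
-/

lemma val_cyc {m : ℕ} (k : Fin m) : (cyc k).val = if k.val + 1 = m then 0 else k.val + 1 := by
  have := k.isLt
  split_ifs with h
  · simp [cyc, h]
  · exact Nat.mod_eq_of_lt (by omega)

lemma cyc_injective {m : ℕ} : Function.Injective (cyc : Fin m → Fin m) := by
  intro i j h
  have hij := congrArg Fin.val h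
  rw [val_cyc, val_cyc] at hij
  have := i.isLt
  have := j.isLt
  ext
  split_ifs at hij <;> omega

/-- Distance between positions `i` and `j` on a cycle of length `L`. -/
def cycDist (L i j : ℕ) : ℕ := min (i - j + (j - i)) (L - (i - j + (j - i)))

lemma cycDist_cyc_le {L j : ℕ} (hj : j < L) (i : Fin L) :
    cycDist L (cyc i) j ≤ cycDist L i j + 1 ∧ cycDist L i j ≤ cycDist L (cyc i) j + 1 := by
  have := i.isLt
  unfold cycDist
  rw [val_cyc]
  split_ifs <;> omega

namespace Replace

variable {V : Type*} {G : Digraph V} {L D : ℕ}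

lemma toVert_eq_inr {e e' : G.Arcs} {i : Fin L} {p : {i : Fin L // i.val ≠ 0 ∧ i.val ≠ D + 1}}
    (h : toVert G L D e i = Sum.inr (e', p)) : e = e' ∧ i = p.1 := by
  by_cases h0 : i.val = 0
  · simp only [toVert, h0, ↓reduceDIte, reduceCtorEq] at h
  by_cases h1 : i.val = D + 1
  · simp only [toVert, h1, ↓reduceDIte, reduceCtorEq] at h
  simp only [toVert, h0, h1, ↓reduceDIte] at h
  cases h
  exact ⟨rfl, rfl⟩

lemma eq_or_eq_of_adj_inr {e : G.Arcs} {p : {i : Fin L // i.val ≠ 0 ∧ i.val ≠ D + 1}}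
    {w : RVert G L D} (h : (Replace G L D).underlying.Adj (Sum.inr (e, p)) w) :
    w = toVert G L D e (cyc p.1) ∨ ∃ i, cyc i = p.1 ∧ w = toVert G L D e i := by
  obtain ⟨-, ⟨e', i, hp, hw⟩ | ⟨e', i, hw, hp⟩⟩ := h
  · obtain ⟨rfl, rfl⟩ := toVert_eq_inr hp.symm
    exact Or.inl hw
  · obtain ⟨rfl, hi⟩ := toVert_eq_inr hp.symm
    exact Or.inr ⟨i, hi, hw⟩

lemma exists_eq_inl_of_three_adj {z a b c : RVert G L D}
    (ha : (Replace G L D).underlying.Adj z a) (hb : (Replace G L D).underlying.Adj z b)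
    (hc : (Replace G L D).underlying.Adj z c) (hab : a ≠ b) (hac : a ≠ c) (hbc : b ≠ c) :
    ∃ x, z = Sum.inl x := by
  obtain x | ⟨e, p⟩ := z
  · exact ⟨x, rfl⟩
  exfalso
  have pred_unique : ∀ i j : Fin L, cyc i = p.1 → cyc j = p.1 →
      toVert G L D e i = toVert G L D e j := fun i j hi hj => by
    rw [cyc_injective (hi.trans hj.symm)]
  rcases eq_or_eq_of_adj_inr ha with rfl | ⟨i, hi, rfl⟩ <;>
  rcases eq_or_eq_of_adj_inr hb with rfl | ⟨j, hj, rfl⟩ <;>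
  rcases eq_or_eq_of_adj_inr hc with rfl | ⟨k, hk, rfl⟩ <;>
  first
    | exact hab rfl | exact hac rfl | exact hbc rfl
    | exact hab (pred_unique _ _ ‹_› ‹_›) | exact hac (pred_unique _ _ ‹_› ‹_›)
    | exact hbc (pred_unique _ _ ‹_› ‹_›)

open Classical in
noncomputable def arcPotential (L D : ℕ) (x : V) (e : G.Arcs) (i : ℕ) : ℕ :=
  min (cycDist L 0 (D + 1)) (min
    (if e.1.1 = x then cycDist L i 0 else cycDist L 0 (D + 1))
    (if e.1.2 = x then cycDist L i (D + 1) else cycDist L 0 (D + 1)))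

open Classical in
/-- The graph distance from `x`, capped at the distance `cycDist L 0 (D + 1)` between tail and
head on each cycle; only its `1`-Lipschitz property is used. -/
noncomputable def potential (G : Digraph V) (L D : ℕ) (x : V) : RVert G L D → ℕ
  | Sum.inl z => if z = x then 0 else cycDist L 0 (D + 1)
  | Sum.inr (e, p) => arcPotential L D x e p.1

lemma potential_toVert (x : V) (e : G.Arcs) (i : Fin L) :
    potential G L D x (toVert G L D e i) = arcPotential L D x e i := by
  have := i.isLt
  by_cases h0 : i.val = 0
  · simp only [toVert, h0, ↓reduceDIte, potential, arcPotential, cycDist]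
    split_ifs <;> omega
  by_cases h1 : i.val = D + 1
  · simp only [toVert, h1, Nat.add_one_ne_zero, ↓reduceDIte, potential, arcPotential, cycDist]
    split_ifs <;> omega
  simp only [toVert, h0, h1, ↓reduceDIte, potential]

lemma potential_le_of_adj (hD : D + 1 < L) (x : V) {a b : RVert G L D}
    (h : (Replace G L D).underlying.Adj a b) :
    potential G L D x b ≤ potential G L D x a + 1 := by
  have key : ∀ (e : G.Arcs) (i : Fin L),
      arcPotential L D x e (cyc i) ≤ arcPotential L D x e i + 1 ∧
      arcPotential L D x e i ≤ arcPotential L D x e (cyc i) + 1 := by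
    intro e i
    have h0 := cycDist_cyc_le (by omega : 0 < L) i
    have h1 := cycDist_cyc_le hD i
    unfold arcPotential
    split_ifs <;> omega
  obtain ⟨-, ⟨e, i, rfl, rfl⟩ | ⟨e, i, rfl, rfl⟩⟩ := h
  · rw [potential_toVert, potential_toVert]
    exact (key e i).1
  · rw [potential_toVert, potential_toVert]
    exact (key e i).2

end Replace

namespace Subdiv

variable {W : Type*} [LinearOrder W] {H : SimpleGraph W} {d : ℕ}

lemma exists_adj_inl_inr (hd : 1 ≤ d) {u w : W} (h : H.Adj u w) :
    ∃ i, (Subdiv H d).Adj (Sum.inl u) (Sum.inr (⟨s(u, w), h⟩, i)) := by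
  rcases lt_or_gt_of_ne (H.ne_of_adj h) with huw | hwu
  · refine ⟨⟨0, hd⟩, Or.inl (Or.inl ⟨rfl, Sym2.mem_mk_left u w, fun z hz => ?_⟩)⟩
    rcases Sym2.mem_iff.mp hz with rfl | rfl <;> order
  · refine ⟨⟨d - 1, by omega⟩, Or.inl (Or.inr ⟨rfl, Sym2.mem_mk_left u w, fun z hz => ?_⟩)⟩
    rcases Sym2.mem_iff.mp hz with rfl | rfl <;> order

lemma le_add_of_lt_of_adj (hd : 1 ≤ d) (ρ : W ⊕ (H.edgeSet × Fin d) → ℕ)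
    (hρ : ∀ a b, (Subdiv H d).Adj a b → ρ b ≤ ρ a + 1) {u v : W} (h : H.Adj u v) (huv : u < v) :
    ρ (Sum.inl v) ≤ ρ (Sum.inl u) + (d + 1) := by
  set e : H.edgeSet := ⟨s(u, v), h⟩
  have along : ∀ k (hk : k < d), ρ (Sum.inr (e, ⟨k, hk⟩)) ≤ ρ (Sum.inl u) + (k + 1) := by
    intro k
    induction k with
    | zero =>
      intro hk
      refine hρ _ _ (Or.inl (Or.inl ⟨rfl, Sym2.mem_mk_left u v, fun z hz => ?_⟩))
      rcases Sym2.mem_iff.mp hz with rfl | rfl <;> order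
    | succ k ih =>
      intro hk
      have := hρ (Sum.inr (e, ⟨k, by omega⟩)) (Sum.inr (e, ⟨k + 1, hk⟩)) (Or.inl ⟨rfl, rfl⟩)
      have := ih (by omega)
      omega
  have last : ρ (Sum.inl v) ≤ ρ (Sum.inr (e, ⟨d - 1, by omega⟩)) + 1 := by
    refine hρ _ _ (Or.inr (Or.inr ⟨rfl, Sym2.mem_mk_right u v, fun z hz => ?_⟩))
    rcases Sym2.mem_iff.mp hz with rfl | rfl <;> order
  have := along (d - 1) (by omega)
  omega

end Subdiv

lemma Replace.exists_eq_inl_of_isSubgraphEmb {V W : Type*} [LinearOrder W] {G : Digraph V}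
    {H : SimpleGraph W} {L D d : ℕ} (hd : 1 ≤ d) {f : W ⊕ (H.edgeSet × Fin d) → RVert G L D}
    (hf : IsSubgraphEmb (Subdiv H d) (Replace G L D).underlying f) {u a b c : W}
    (ha : H.Adj u a) (hb : H.Adj u b) (hc : H.Adj u c) (hab : a ≠ b) (hac : a ≠ c)
    (hbc : b ≠ c) : ∃ x, f (Sum.inl u) = Sum.inl x := by
  have image_ne : ∀ {w w'} (hw : H.Adj u w) (hw' : H.Adj u w') i j, w ≠ w' →
      f (Sum.inr (⟨s(u, w), hw⟩, i)) ≠ f (Sum.inr (⟨s(u, w'), hw'⟩, j)) := by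
    intro w w' hw hw' i j hne h
    have := congrArg (fun p => p.1.1) (Sum.inr_injective (hf.1 h))
    exact hne (Sym2.congr_right.mp this)
  obtain ⟨i, hi⟩ := Subdiv.exists_adj_inl_inr hd ha
  obtain ⟨j, hj⟩ := Subdiv.exists_adj_inl_inr hd hb
  obtain ⟨k, hk⟩ := Subdiv.exists_adj_inl_inr hd hc
  exact Replace.exists_eq_inl_of_three_adj (hf.2 _ _ hi) (hf.2 _ _ hj) (hf.2 _ _ hk)
    (image_ne ha hb i j hab) (image_ne ha hc i k hac) (image_ne hb hc j k hbc)

theorem stmt14_general (d : ℕ) (hd : 1 ≤ d) (N : ℕ) (hN : d + 3 ≤ N)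
    {V : Type*} [Fintype V] (G : Digraph V) :
    ¬ ∃ f, IsSubgraphEmb (Subdiv (⊤ : SimpleGraph (Fin N)) d)
      (Replace G (2 * Fintype.card V) (Fintype.card V - 1)).underlying f := by
  rintro ⟨f, hf⟩
  have branch : ∀ u : Fin N, ∃ x, f (Sum.inl u) = Sum.inl x := by
    intro u
    have : 2 < (Finset.univ.erase u).card := by
      rw [Finset.card_erase_of_mem (Finset.mem_univ u), Finset.card_univ, Fintype.card_fin]
      omega
    obtain ⟨a, ha, b, hb, c, hc, hab, hac, hbc⟩ := Finset.two_lt_card.mp this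
    exact Replace.exists_eq_inl_of_isSubgraphEmb hd hf (Finset.ne_of_mem_erase ha).symm
      (Finset.ne_of_mem_erase hb).symm (Finset.ne_of_mem_erase hc).symm hab hac hbc
  choose g hg using branch
  have hg_inj : Function.Injective g := fun a b h =>
    Sum.inl_injective (hf.1 (by rw [hg, hg, h]))
  have hcard : d + 3 ≤ Fintype.card V :=
    hN.trans (by simpa using Fintype.card_le_of_injective g hg_inj)
  have h01 : (⊤ : SimpleGraph (Fin N)).Adj ⟨0, by omega⟩ ⟨1, by omega⟩ := by simp
  have hpath := Subdiv.le_add_of_lt_of_adj hd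
    (Replace.potential G (2 * Fintype.card V) (Fintype.card V - 1) (g ⟨0, by omega⟩) ∘ f)
    (fun a b h => Replace.potential_le_of_adj (by omega) _ (hf.2 a b h)) h01 (by simp)
  have hg01 : g ⟨1, by omega⟩ ≠ g ⟨0, by omega⟩ := hg_inj.ne (by simp)
  simp only [Function.comp, hg, Replace.potential, hg01, if_true, if_false, cycDist] at hpath
  omega

/-- The class of underlying undirected graphs of `G*(C_{2n},a,b)` (with `G`
a finite oriented graph, `n = |V(G)|`, and `a`, `b` at directed distance `n` on the cycle
of length `2n`) is nowhere dense: for every `d ≥ 1` and every `N ≥ d + 3`, the `d`-th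
subdivision of `K_N` is a subgraph of no graph in this class. -/
theorem stmt14 (d : ℕ) (hd : 1 ≤ d) (N : ℕ) (hN : d + 3 ≤ N)
    {V : Type*} [Fintype V] (G : Digraph V) (hG : G.Oriented) :
    ¬ ∃ f, IsSubgraphEmb (Subdiv (⊤ : SimpleGraph (Fin N)) d)
      (Replace G (2 * Fintype.card V) (Fintype.card V - 1)).underlying f :=
  stmt14_general d hd N hN G
end
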